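/- arXiv:0810.1646 — 4 statements merged into one kernel-verified Lean document; each statement's English description precedes it below -/
import Mathlib

section
/- Let n > 1, let g be a positive definite symmetric bilinear form on ℝⁿ with matrix (g_{ij}), and fix a vector y ∈ ℝⁿ with g(y,y) ≠ 0. Set g_{0i} = Σ_k y^k g_{ki}. If real numbers u, v satisfy u·g_{ij} + v·g_{0i}·g_{0j} = 0 for all indices i, j, then u = 0 and v = 0. -/
/-!
Write `w = y ᵥ* g`, so that `g_{0i} = w i` and the hypothesis says `u • g + v • w wᵀ = 0`.
Since `n > 1`, some `x ≠ 0` has `w ⬝ᵥ x = 0`; evaluating the quadratic form at `x` leaves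
`u * g(x, x) = 0`, so `u = 0` by positive definiteness. Then `v • w wᵀ = 0`, and `w ≠ 0`
because `w ⬝ᵥ y = g(y, y) ≠ 0`, so `v = 0`.
-/

open Matrix

namespace Matrix

variable {ι K : Type*} [Field K]

theorem exists_ne_zero_dotProduct_eq_zero [Fintype ι] (hι : 1 < Fintype.card ι) (w : ι → K) :
    ∃ x ≠ 0, w ⬝ᵥ x = 0 := by
  classical
  have hker : LinearMap.ker (dotProductEquiv K ι w : (ι → K) →ₗ[K] K) ≠ ⊥ :=
    LinearMap.ker_ne_bot_of_finrank_lt (by simpa using hι)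
  obtain ⟨x, hx, hx0⟩ := (Submodule.ne_bot_iff _).mp hker
  exact ⟨x, hx0, hx⟩

theorem dotProduct_smul_add_smul_vecMulVec_mulVec [Fintype ι] (u v : K) (M : Matrix ι ι K)
    (w x z : ι → K) :
    x ⬝ᵥ (u • M + v • vecMulVec w w) *ᵥ z =
      u * (x ⬝ᵥ M *ᵥ z) + v * ((x ⬝ᵥ w) * (w ⬝ᵥ z)) := by
  simp only [add_mulVec, smul_mulVec, vecMulVec_mulVec, dotProduct_add, dotProduct_smul,
    op_smul_eq_smul, smul_eq_mul]
  ring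

theorem eq_zero_of_smul_vecMulVec_self_eq_zero {v : K} {w : ι → K} (hw : w ≠ 0)
    (h : v • vecMulVec w w = 0) : v = 0 := by
  obtain ⟨i, hi⟩ := Function.ne_iff.mp hw
  have hii := congrFun (congrFun h i) i
  simp only [smul_apply, vecMulVec_apply, smul_eq_mul, zero_apply] at hii
  exact (mul_eq_zero.mp hii).resolve_right (mul_ne_zero hi hi)

theorem PosDef.smul_add_smul_vecMulVec_self_eq_zero_iff [Fintype ι] [LinearOrder K]
    [IsStrictOrderedRing K] [StarRing K] [TrivialStar K] {M : Matrix ι ι K} (hM : M.PosDef)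
    (hι : 1 < Fintype.card ι) {w : ι → K} (hw : w ≠ 0) {u v : K} :
    u • M + v • vecMulVec w w = 0 ↔ u = 0 ∧ v = 0 := by
  refine ⟨fun h => ?_, by rintro ⟨rfl, rfl⟩; simp⟩
  obtain ⟨x, hx0, hxw⟩ := exists_ne_zero_dotProduct_eq_zero hι w
  have hu : u = 0 := by
    have hquad := dotProduct_smul_add_smul_vecMulVec_mulVec u v M w x x
    rw [h, zero_mulVec, dotProduct_zero, dotProduct_comm x w, hxw, zero_mul, mul_zero, add_zero,
      eq_comm] at hquad
    have hpos : 0 < x ⬝ᵥ M *ᵥ x := by simpa using hM.dotProduct_mulVec_pos hx0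
    exact (mul_eq_zero.mp hquad).resolve_right hpos.ne'
  subst hu
  exact ⟨rfl, eq_zero_of_smul_vecMulVec_self_eq_zero hw (by simpa using h)⟩

end Matrix

theorem stmt_0 (n : ℕ) (hn : 1 < n) (g : Matrix (Fin n) (Fin n) ℝ)
    (hg : g.PosDef) (y : Fin n → ℝ) (hy : y ⬝ᵥ g.mulVec y ≠ 0)
    (u v : ℝ)
    (h : ∀ i j : Fin n, u * g i j + v * ((∑ k, y k * g k i) * (∑ k, y k * g k j)) = 0) :
    u = 0 ∧ v = 0 := by
  have hw : y ᵥ* g ≠ 0 := by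
    rintro hw
    rw [dotProduct_mulVec, hw, zero_dotProduct] at hy
    exact hy rfl
  refine (hg.smul_add_smul_vecMulVec_self_eq_zero_iff (by simpa using hn) hw).mp ?_
  ext i j
  simpa [vecMulVec_apply, vecMul, dotProduct] using h i j
end

section
/- Let n ≥ 3 (so that there exist at least three linearly independent directions), let g be a positive definite symmetric bilinear form on ℝⁿ, let y ∈ ℝⁿ be a nonzero vector, and set g_{0i} = Σ_k y^k g_{ki}. If real numbers α₁,…,α₁₀ satisfy, for all indices h, i, j, k, α₁ δ^h_i g_{jk} + α₂ δ^h_j g_{ik} + α₃ δ^h_k g_{ij} + α₄ δ^h_k g_{0i} g_{0j} + α₅ δ^h_j g_{0i} g_{0k} + α₆ δ^h_i g_{0j} g_{0k} + α₇ g_{jk} g_{0i} y^h + α₈ g_{ik} g_{0j} y^h + α₉ g_{ij} g_{0k} y^h + α₁₀ g_{0i} g_{0j} g_{0k} y^h = 0, then α₁ = α₂ = ⋯ = α₁₀ = 0. -/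
/-!
Contract the tensor identity in its three lower indices with arbitrary vectors `u, v, w`: it
becomes a vector identity in `u, v, w, y`, with `g` and `g_{0i}` turned into `g(·,·)` and
`g(y, ·)`. Since `n ≥ 3`, there are nonzero `p, q` with `y, p, q` pairwise `g`-orthogonal, and
`g(y, y)`, `g(p, p)` do not vanish by positivity. Evaluating the identity at suitable triples
drawn from `y, p, q` kills all but one term each time, which forces the coefficients to vanish
one after another.
-/

open Matrix Module

section Combination

variable {K V : Type*}

/-- The paper's combination `∑ αₐ Mₐ` of the ten M-tensors, contracted with `u, v, w` in the
lower indices `i, j, k`; `B y` plays the role of `g_{0·}`. -/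
def mTensorCombination [CommSemiring K] [AddCommMonoid V] [Module K V]
    (B : LinearMap.BilinForm K V) (y : V) (α₁ α₂ α₃ α₄ α₅ α₆ α₇ α₈ α₉ α₁₀ : K) (u v w : V) : V :=
  (α₁ * B v w) • u + (α₂ * B u w) • v + (α₃ * B u v) • w
    + (α₄ * B y u * B y v) • w + (α₅ * B y u * B y w) • v + (α₆ * B y v * B y w) • u
    + (α₇ * B y u * B v w + α₈ * B u w * B y v + α₉ * B u v * B y w
      + α₁₀ * B y u * B y v * B y w) • y

variable [Field K] [AddCommGroup V] [Module K V]

theorem exists_orthogonal_pair [FiniteDimensional K V] (hV : 3 ≤ finrank K V)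
    (B : LinearMap.BilinForm K V) (y : V) :
    ∃ p q : V, p ≠ 0 ∧ q ≠ 0 ∧ B y p = 0 ∧ B y q = 0 ∧ B p q = 0 := by
  obtain ⟨p, hp, hp0⟩ := Submodule.ne_bot_iff _ |>.mp <|
    (B y).ker_ne_bot_of_finrank_lt (by rw [finrank_self]; omega)
  obtain ⟨q, hq, hq0⟩ := Submodule.ne_bot_iff _ |>.mp <|
    ((B y).prod (B p)).ker_ne_bot_of_finrank_lt (by rw [finrank_prod, finrank_self]; omega)
  simp only [LinearMap.mem_ker, LinearMap.prod_apply, Function.prod, Prod.mk_eq_zero] at hp hq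
  exact ⟨p, q, hp0, hq0, hp, hq.1, hq.2⟩

theorem mTensorCombination_coeffs_eq_zero {B : LinearMap.BilinForm K V} (hB : B.IsSymm)
    {y p q : V} (hyy : B y y ≠ 0) (hpp : B p p ≠ 0) (hq : q ≠ 0)
    (hyp : B y p = 0) (hyq : B y q = 0) (hpq : B p q = 0)
    {α₁ α₂ α₃ α₄ α₅ α₆ α₇ α₈ α₉ α₁₀ : K}
    (hα : ∀ u v w, mTensorCombination B y α₁ α₂ α₃ α₄ α₅ α₆ α₇ α₈ α₉ α₁₀ u v w = 0) :
    α₁ = 0 ∧ α₂ = 0 ∧ α₃ = 0 ∧ α₄ = 0 ∧ α₅ = 0 ∧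
    α₆ = 0 ∧ α₇ = 0 ∧ α₈ = 0 ∧ α₉ = 0 ∧ α₁₀ = 0 := by
  have hy : y ≠ 0 := by rintro rfl; simp at hyy
  have hp : p ≠ 0 := by rintro rfl; simp at hpp
  have orth : B y p = 0 ∧ B p y = 0 ∧ B y q = 0 ∧ B q y = 0 ∧ B p q = 0 ∧ B q p = 0 :=
    ⟨hyp, by rw [hB.eq, hyp], hyq, by rw [hB.eq, hyq], hpq, by rw [hB.eq, hpq]⟩
  have e₁ : α₁ = 0 := by simpa [mTensorCombination, orth, hpp, hq] using hα q p p
  have e₂ : α₂ = 0 := by simpa [mTensorCombination, orth, hpp, hq] using hα p q p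
  have e₃ : α₃ = 0 := by simpa [mTensorCombination, orth, hpp, hq] using hα p p q
  have e₄ : α₄ = 0 := by simpa [mTensorCombination, orth, e₃, hyy, hp] using hα y y p
  have e₅ : α₅ = 0 := by simpa [mTensorCombination, orth, e₂, hyy, hp] using hα y p y
  have e₆ : α₆ = 0 := by simpa [mTensorCombination, orth, e₁, hyy, hp] using hα p y y
  have e₇ : α₇ = 0 := by simpa [mTensorCombination, orth, e₁, hyy, hpp, hy] using hα y p p
  have e₈ : α₈ = 0 := by simpa [mTensorCombination, orth, e₂, hyy, hpp, hy] using hα p y p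
  have e₉ : α₉ = 0 := by simpa [mTensorCombination, orth, e₃, hyy, hpp, hy] using hα p p y
  have e₁₀ : α₁₀ = 0 := by
    simpa [mTensorCombination, e₁, e₂, e₃, e₄, e₅, e₆, e₇, e₈, e₉, hyy, hy] using hα y y y
  exact ⟨e₁, e₂, e₃, e₄, e₅, e₆, e₇, e₈, e₉, e₁₀⟩

end Combination

section Contraction

variable {ι R : Type*} [Fintype ι] [CommSemiring R]

theorem sum_sum_sum_mul_factor_fst (u v w a : ι → R) (M : Matrix ι ι R) (c : R) :
    ∑ i, ∑ j, ∑ k, u i * v j * w k * (c * (a i * M j k)) = c * ((u ⬝ᵥ a) * (v ⬝ᵥ M *ᵥ w)) := by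
  rw [mul_comm (u ⬝ᵥ a)]
  simp only [dotProduct, mulVec, Finset.mul_sum, Finset.sum_mul]
  exact Finset.sum_congr rfl fun i _ => Finset.sum_congr rfl fun j _ =>
    Finset.sum_congr rfl fun k _ => by ring

theorem sum_sum_sum_mul_factor_snd (u v w a : ι → R) (M : Matrix ι ι R) (c : R) :
    ∑ i, ∑ j, ∑ k, u i * v j * w k * (c * (a j * M i k)) = c * ((v ⬝ᵥ a) * (u ⬝ᵥ M *ᵥ w)) := by
  simp only [dotProduct, mulVec, Finset.mul_sum, Finset.sum_mul]
  refine Finset.sum_congr rfl fun i _ => ?_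
  rw [Finset.sum_comm]
  exact Finset.sum_congr rfl fun k _ => Finset.sum_congr rfl fun j _ => by ring

theorem sum_sum_sum_mul_factor_thd (u v w a : ι → R) (M : Matrix ι ι R) (c : R) :
    ∑ i, ∑ j, ∑ k, u i * v j * w k * (c * (a k * M i j)) = c * ((w ⬝ᵥ a) * (u ⬝ᵥ M *ᵥ v)) := by
  simp only [dotProduct, mulVec, Finset.mul_sum, Finset.sum_mul]
  exact Finset.sum_congr rfl fun i _ => Finset.sum_congr rfl fun j _ =>
    Finset.sum_congr rfl fun k _ => by ring

variable [DecidableEq ι]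

def mTensor (g : Matrix ι ι R) (g0 y : ι → R) (α₁ α₂ α₃ α₄ α₅ α₆ α₇ α₈ α₉ α₁₀ : R)
    (h i j k : ι) : R :=
  α₁ * (if h = i then (1:R) else 0) * g j k
    + α₂ * (if h = j then (1:R) else 0) * g i k
    + α₃ * (if h = k then (1:R) else 0) * g i j
    + α₄ * (if h = k then (1:R) else 0) * g0 i * g0 j
    + α₅ * (if h = j then (1:R) else 0) * g0 i * g0 k
    + α₆ * (if h = i then (1:R) else 0) * g0 j * g0 k
    + α₇ * g j k * g0 i * y h
    + α₈ * g i k * g0 j * y h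
    + α₉ * g i j * g0 k * y h
    + α₁₀ * g0 i * g0 j * g0 k * y h

theorem mTensorCombination_toBilin'_apply (g : Matrix ι ι R) (y : ι → R)
    (α₁ α₂ α₃ α₄ α₅ α₆ α₇ α₈ α₉ α₁₀ : R) (u v w : ι → R) (h : ι) :
    mTensorCombination (toBilin' g) y α₁ α₂ α₃ α₄ α₅ α₆ α₇ α₈ α₉ α₁₀ u v w h =
      ∑ i, ∑ j, ∑ k, u i * v j * w k *
        mTensor g (y ᵥ* g) y α₁ α₂ α₃ α₄ α₅ α₆ α₇ α₈ α₉ α₁₀ h i j k := by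
  set g0 := y ᵥ* g
  set δ : ι → R := Pi.single h 1
  set G := vecMulVec g0 g0
  -- each term splits as (factor in `h` and one lower index) * (factor in the other two)
  have hsplit : ∀ i j k, u i * v j * w k * mTensor g g0 y α₁ α₂ α₃ α₄ α₅ α₆ α₇ α₈ α₉ α₁₀ h i j k =
      u i * v j * w k * (α₁ * (δ i * g j k)) + u i * v j * w k * (α₂ * (δ j * g i k))
      + u i * v j * w k * (α₃ * (δ k * g i j)) + u i * v j * w k * (α₄ * (δ k * G i j))
      + u i * v j * w k * (α₅ * (δ j * G i k)) + u i * v j * w k * (α₆ * (δ i * G j k))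
      + u i * v j * w k * (α₇ * ((y h • g0) i * g j k))
      + u i * v j * w k * (α₈ * ((y h • g0) j * g i k))
      + u i * v j * w k * (α₉ * ((y h • g0) k * g i j))
      + u i * v j * w k * (α₁₀ * ((y h • g0) i * G j k)) := by
    intro i j k
    simp only [mTensor, δ, G, Pi.single_apply, vecMulVec_apply, Pi.smul_apply, smul_eq_mul,
      eq_comm (a := h)]
    ring
  simp only [hsplit, Finset.sum_add_distrib, sum_sum_sum_mul_factor_fst, sum_sum_sum_mul_factor_snd,
    sum_sum_sum_mul_factor_thd]
  simp only [mTensorCombination, toBilin'_apply', dotProduct_mulVec y, Pi.add_apply, Pi.smul_apply,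
    smul_eq_mul, δ, dotProduct_single, mul_one, G, vecMulVec_mulVec, op_smul_eq_smul,
    dotProduct_smul, g0, dotProduct_comm _ (y ᵥ* g)]
  ring

end Contraction

theorem stmt_2 (n : ℕ) (hn : 3 ≤ n) (g : Matrix (Fin n) (Fin n) ℝ)
    (hg : g.PosDef) (y : Fin n → ℝ) (hy : y ≠ 0)
    (α₁ α₂ α₃ α₄ α₅ α₆ α₇ α₈ α₉ α₁₀ : ℝ)
    (g0 : Fin n → ℝ) (hg0 : ∀ i, g0 i = ∑ k, y k * g k i)
    (h : ∀ h i j k : Fin n,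
        α₁ * (if h = i then (1:ℝ) else 0) * g j k
      + α₂ * (if h = j then (1:ℝ) else 0) * g i k
      + α₃ * (if h = k then (1:ℝ) else 0) * g i j
      + α₄ * (if h = k then (1:ℝ) else 0) * g0 i * g0 j
      + α₅ * (if h = j then (1:ℝ) else 0) * g0 i * g0 k
      + α₆ * (if h = i then (1:ℝ) else 0) * g0 j * g0 k
      + α₇ * g j k * g0 i * y h
      + α₈ * g i k * g0 j * y h
      + α₉ * g i j * g0 k * y h
      + α₁₀ * g0 i * g0 j * g0 k * y h = 0) :
    α₁ = 0 ∧ α₂ = 0 ∧ α₃ = 0 ∧ α₄ = 0 ∧ α₅ = 0 ∧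
    α₆ = 0 ∧ α₇ = 0 ∧ α₈ = 0 ∧ α₉ = 0 ∧ α₁₀ = 0 := by
  obtain rfl : g0 = y ᵥ* g := funext hg0
  have hpos : ∀ x ≠ 0, toBilin' g x x ≠ 0 := fun x hx => by
    rw [toBilin'_apply']
    exact (hg.dotProduct_mulVec_pos hx).ne'
  have hsymm : (toBilin' g).IsSymm := isSymm_toBilin'_iff_isSymm.mpr (by simpa using hg.isHermitian)
  obtain ⟨p, q, hp, hq, hyp, hyq, hpq⟩ := exists_orthogonal_pair (by simpa using hn) (toBilin' g) y
  refine mTensorCombination_coeffs_eq_zero hsymm (hpos y hy) (hpos p hp) hq hyp hyq hpq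
    fun u v w => funext fun a => ?_
  simp only [mTensorCombination_toBilin'_apply, mTensor, h, mul_zero, Finset.sum_const_zero,
    Pi.zero_apply]
end

section
/- Let g be a positive definite symmetric n×n real matrix, y ∈ ℝⁿ, t := (1/2)⟨y, g y⟩, and g₀ := g y (so (g₀)_i = Σ_k g_{ik} y^k). Let c₁, c₂, c₃, d₁, d₂, d₃ be real numbers such that c₁c₂ − c₃² ≠ 0 and (c₁+2td₁)(c₂+2td₂) − (c₃+2td₃)² ≠ 0 and c₂ + 2td₂ ≠ 0. Define the 2n×2n block matrix M with blocks G⁽¹⁾ = c₁g + d₁g₀g₀ᵀ, G⁽²⁾ = c₂g + d₂g₀g₀ᵀ, G⁽³⁾ = c₃g + d₃g₀g₀ᵀ arranged as [[G⁽¹⁾, G⁽³⁾],[G⁽³⁾, G⁽²⁾]]. Then M is invertible and its inverse has the block form [[H₍₁₎, H₍₃₎],[H₍₃₎, H₍₂₎]] with H₍α₎ = p_α g⁻¹ + q_α y yᵀ for some real numbers p_α, q_α (α = 1,2,3); moreover p₁ = c₂/(c₁c₂−c₃²), p₂ = c₁/(c₁c₂−c₃²), p₃ = −c₃/(c₁c₂−c₃²).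 -/
/-!
Write `M = C ⊗ g + D ⊗ g₀g₀ᵀ` with `C`, `D` the symmetric `2 × 2` matrices of the `cᵢ` and `dᵢ`.
Since `g` is symmetric, `g₀g₀ᵀ = g W g` with `W = y yᵀ`, and `W g W = 2t W`. Hence
`M (P ⊗ g⁻¹ + Q ⊗ W) = CP ⊗ 1 + (CQ + DP + 2t DQ) ⊗ gW`, which is `1` for `P = C⁻¹` and
`Q = -(C + 2tD)⁻¹ D C⁻¹`. This `Q` is symmetric: with `Y = (C + 2tD)⁻¹`, both `Y D C⁻¹` and
`C⁻¹ D Y` equal `Y (D + 2t D C⁻¹ D) Y`. The entries of `P = C⁻¹` are the `p_α`.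
-/

open Matrix

namespace Matrix

section KronBlocks

variable {n R : Type*} [CommSemiring R]

/-- The Kronecker product `A ⊗ X`, laid out as a `2 × 2` block matrix. -/
def kronBlocks (A : Matrix (Fin 2) (Fin 2) R) (X : Matrix n n R) : Matrix (n ⊕ n) (n ⊕ n) R :=
  fromBlocks (A 0 0 • X) (A 0 1 • X) (A 1 0 • X) (A 1 1 • X)

theorem kronBlocks_mul [Fintype n] (A B : Matrix (Fin 2) (Fin 2) R) (X Y : Matrix n n R) :
    kronBlocks A X * kronBlocks B Y = kronBlocks (A * B) (X * Y) := by
  simp only [kronBlocks, fromBlocks_multiply, mul_apply, Fin.sum_univ_two, Matrix.smul_mul,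
    Matrix.mul_smul, smul_smul, add_smul, mul_comm (B _ _) (A _ _)]

theorem kronBlocks_add_left (A B : Matrix (Fin 2) (Fin 2) R) (X : Matrix n n R) :
    kronBlocks (A + B) X = kronBlocks A X + kronBlocks B X := by
  simp only [kronBlocks, fromBlocks_add, add_apply, add_smul]

theorem kronBlocks_smul_left (s : R) (A : Matrix (Fin 2) (Fin 2) R) (X : Matrix n n R) :
    kronBlocks (s • A) X = kronBlocks A (s • X) := by
  simp only [kronBlocks, smul_apply, smul_eq_mul, smul_smul, mul_comm s]

@[simp] theorem kronBlocks_one_one [DecidableEq n] :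
    kronBlocks (1 : Matrix (Fin 2) (Fin 2) R) (1 : Matrix n n R) = 1 := by
  simp [kronBlocks, fromBlocks_one]

@[simp] theorem kronBlocks_zero_left (X : Matrix n n R) : kronBlocks 0 X = 0 := by
  simp [kronBlocks, fromBlocks_zero]

end KronBlocks

theorem vecMulVec_mul_mul_vecMulVec {n R : Type*} [Fintype n] [CommSemiring R] (x u v : n → R)
    (A : Matrix n n R) (w : n → R) :
    vecMulVec x u * A * vecMulVec v w = (u ⬝ᵥ A *ᵥ v) • vecMulVec x w := by
  rw [vecMulVec_mul, vecMulVec_mul_vecMulVec, vecMulVec_smul, dotProduct_mulVec]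

variable {m K : Type*} [Fintype m] [DecidableEq m] [Field K]

theorem isSymm_inv_add_smul_mul_mul_inv {C D : Matrix m m K} (s : K) (hC : C.IsSymm)
    (hD : D.IsSymm) (hCu : IsUnit C.det) (hCDu : IsUnit (C + s • D).det) :
    ((C + s • D)⁻¹ * D * C⁻¹).IsSymm := by
  set Y := (C + s • D)⁻¹
  have hYDC : Y * D * C⁻¹ = C⁻¹ * D * Y := by
    calc Y * D * C⁻¹ = Y * D * C⁻¹ * ((C + s • D) * Y) := by
          rw [mul_nonsing_inv _ hCDu, Matrix.mul_one]
      _ = Y * (D + s • (D * C⁻¹ * D)) * Y := by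
          simp only [Matrix.mul_add, Matrix.add_mul, Matrix.mul_smul, Matrix.smul_mul,
            Matrix.mul_assoc, nonsing_inv_mul_cancel_left _ _ hCu]
      _ = Y * (C + s • D) * C⁻¹ * D * Y := by
          simp only [Matrix.mul_add, Matrix.add_mul, Matrix.mul_smul, Matrix.smul_mul,
            Matrix.mul_assoc, mul_nonsing_inv_cancel_left _ _ hCu]
      _ = C⁻¹ * D * Y := by rw [nonsing_inv_mul _ hCDu, Matrix.one_mul]
  rw [IsSymm, transpose_mul, transpose_mul, transpose_nonsing_inv, transpose_nonsing_inv,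
    transpose_add, transpose_smul, hC.eq, hD.eq, hYDC, Matrix.mul_assoc]

theorem inv_fin_two_of (a b c d : K) :
    !![a, b; c, d]⁻¹ = (a * d - b * c)⁻¹ • !![d, -b; -c, a] := by
  rw [inv_def, det_fin_two_of, adjugate_fin_two_of, Ring.inverse_eq_inv']

theorem kronBlocks_mul_kronBlocks_eq_one {C D : Matrix (Fin 2) (Fin 2) K} {g W : Matrix m m K}
    {s : K} (hg : IsUnit g.det) (hW : W * g * W = s • W) (hC : IsUnit C.det)
    (hCD : IsUnit (C + s • D).det) :
    (kronBlocks C g + kronBlocks D (g * W * g)) *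
      (kronBlocks C⁻¹ g⁻¹ + kronBlocks (-((C + s • D)⁻¹ * D * C⁻¹)) W) = 1 := by
  set Q := -((C + s • D)⁻¹ * D * C⁻¹)
  have hQ : C * Q + D * C⁻¹ + s • (D * Q) = 0 := by
    have hCDQ : (C + s • D) * Q = -(D * C⁻¹) := by
      rw [Matrix.mul_neg, Matrix.mul_assoc, mul_nonsing_inv_cancel_left _ _ hCD]
    rw [← neg_add_cancel (D * C⁻¹), ← hCDQ, Matrix.add_mul, Matrix.smul_mul]
    abel
  have hgWg : g * W * g * g⁻¹ = g * W := mul_nonsing_inv_cancel_right _ _ hg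
  have hgWgW : g * W * g * W = s • (g * W) := by
    rw [Matrix.mul_assoc g W g, Matrix.mul_assoc, hW, Matrix.mul_smul]
  calc _ = kronBlocks (C * C⁻¹) 1 + kronBlocks (C * Q + D * C⁻¹ + s • (D * Q)) (g * W) := by
        rw [Matrix.add_mul, Matrix.mul_add, Matrix.mul_add, kronBlocks_mul, kronBlocks_mul,
          kronBlocks_mul, kronBlocks_mul, mul_nonsing_inv _ hg, hgWg, hgWgW,
          ← kronBlocks_smul_left, kronBlocks_add_left, kronBlocks_add_left]
        abel
    _ = 1 := by rw [mul_nonsing_inv _ hC, hQ, kronBlocks_one_one, kronBlocks_zero_left, add_zero]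

end Matrix

theorem stmt_4_general (n : ℕ) (g : Matrix (Fin n) (Fin n) ℝ) (hg : g.PosDef)
    (y : Fin n → ℝ) (t : ℝ) (ht : t = (1/2) * (y ⬝ᵥ g.mulVec y))
    (c₁ c₂ c₃ d₁ d₂ d₃ : ℝ)
    (h1 : c₁ * c₂ - c₃ ^ 2 ≠ 0)
    (h2 : (c₁ + 2*t*d₁) * (c₂ + 2*t*d₂) - (c₃ + 2*t*d₃) ^ 2 ≠ 0)
    (g₀ : Fin n → ℝ) (hg₀ : g₀ = g.mulVec y)
    (M : Matrix (Fin n ⊕ Fin n) (Fin n ⊕ Fin n) ℝ)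
    (hM : M = fromBlocks (c₁ • g + d₁ • vecMulVec g₀ g₀) (c₃ • g + d₃ • vecMulVec g₀ g₀)
                         (c₃ • g + d₃ • vecMulVec g₀ g₀) (c₂ • g + d₂ • vecMulVec g₀ g₀)) :
    IsUnit M ∧
    ∃ q₁ q₂ q₃ : ℝ,
      M⁻¹ = fromBlocks
        ((c₂ / (c₁ * c₂ - c₃ ^ 2)) • g⁻¹ + q₁ • vecMulVec y y)
        ((-(c₃) / (c₁ * c₂ - c₃ ^ 2)) • g⁻¹ + q₃ • vecMulVec y y)
        ((-(c₃) / (c₁ * c₂ - c₃ ^ 2)) • g⁻¹ + q₃ • vecMulVec y y)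
        ((c₁ / (c₁ * c₂ - c₃ ^ 2)) • g⁻¹ + q₂ • vecMulVec y y) := by
  have hgT : gᵀ = g := by rw [← conjTranspose_eq_transpose_of_trivial, hg.1.eq]
  have hgu : IsUnit g.det := hg.det_pos.ne'.isUnit
  set W := vecMulVec y y
  have hW : W * g * W = (2 * t) • W := by
    rw [vecMulVec_mul_mul_vecMulVec, ht, ← mul_assoc, mul_one_div_cancel two_ne_zero, one_mul]
  set C : Matrix (Fin 2) (Fin 2) ℝ := !![c₁, c₃; c₃, c₂]
  set D : Matrix (Fin 2) (Fin 2) ℝ := !![d₁, d₃; d₃, d₂]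
  have hCs : C.IsSymm := IsSymm.ext fun i j => by fin_cases i <;> fin_cases j <;> rfl
  have hDs : D.IsSymm := IsSymm.ext fun i j => by fin_cases i <;> fin_cases j <;> rfl
  have hCu : IsUnit C.det := by
    rw [det_fin_two_of, ← sq]
    exact h1.isUnit
  have hCDu : IsUnit (C + (2 * t) • D).det := by
    rw [show C + (2 * t) • D = !![c₁ + 2*t*d₁, c₃ + 2*t*d₃; c₃ + 2*t*d₃, c₂ + 2*t*d₂] by
      ext i j; fin_cases i <;> fin_cases j <;> simp [C, D], det_fin_two_of, ← sq]
    exact h2.isUnit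
  have hM' : M = kronBlocks C g + kronBlocks D (g * W * g) := by
    rw [hM, hg₀, mul_vecMulVec, vecMulVec_mul, ← mulVec_transpose, hgT]
    simp [kronBlocks, fromBlocks_add, C, D]
  have hMN := kronBlocks_mul_kronBlocks_eq_one hgu hW hCu hCDu
  rw [← hM'] at hMN
  set Q := -((C + (2 * t) • D)⁻¹ * D * C⁻¹)
  have hQ : Q.IsSymm := (isSymm_inv_add_smul_mul_mul_inv (2 * t) hCs hDs hCu hCDu).neg
  refine ⟨(isUnit_iff_isUnit_det M).mpr (isUnit_det_of_right_inverse hMN), Q 0 0, Q 1 1, Q 0 1, ?_⟩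
  rw [inv_eq_right_inv hMN, inv_fin_two_of]
  simp [kronBlocks, fromBlocks_add, sq, div_eq_inv_mul, hQ.apply 0 1]

theorem stmt_4 (n : ℕ) (g : Matrix (Fin n) (Fin n) ℝ) (hg : g.PosDef)
    (y : Fin n → ℝ) (t : ℝ) (ht : t = (1/2) * (y ⬝ᵥ g.mulVec y))
    (c₁ c₂ c₃ d₁ d₂ d₃ : ℝ)
    (h1 : c₁ * c₂ - c₃ ^ 2 ≠ 0)
    (h2 : (c₁ + 2*t*d₁) * (c₂ + 2*t*d₂) - (c₃ + 2*t*d₃) ^ 2 ≠ 0)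
    (h3 : c₂ + 2*t*d₂ ≠ 0)
    (g₀ : Fin n → ℝ) (hg₀ : g₀ = g.mulVec y)
    (M : Matrix (Fin n ⊕ Fin n) (Fin n ⊕ Fin n) ℝ)
    (hM : M = fromBlocks (c₁ • g + d₁ • vecMulVec g₀ g₀) (c₃ • g + d₃ • vecMulVec g₀ g₀)
                         (c₃ • g + d₃ • vecMulVec g₀ g₀) (c₂ • g + d₂ • vecMulVec g₀ g₀)) :
    IsUnit M ∧
    ∃ q₁ q₂ q₃ : ℝ,
      M⁻¹ = fromBlocks
        ((c₂ / (c₁ * c₂ - c₃ ^ 2)) • g⁻¹ + q₁ • vecMulVec y y)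
        ((-(c₃) / (c₁ * c₂ - c₃ ^ 2)) • g⁻¹ + q₃ • vecMulVec y y)
        ((-(c₃) / (c₁ * c₂ - c₃ ^ 2)) • g⁻¹ + q₃ • vecMulVec y y)
        ((c₁ / (c₁ * c₂ - c₃ ^ 2)) • g⁻¹ + q₂ • vecMulVec y y) :=
  stmt_4_general n g hg y t ht c₁ c₂ c₃ d₁ d₂ d₃ h1 h2 g₀ hg₀ M hM
end

section
/- Let g be a positive definite symmetric n×n real matrix, y ∈ ℝⁿ nonzero, g₀ := gy, and c₃, d₃ real numbers with c₃ ≠ 0 and c₃ + 2td₃ ≠ 0, where t := (1/2)⟨y, gy⟩. Then the 2n×2n antidiagonal block matrix [[0, c₃g + d₃g₀g₀ᵀ],[c₃g + d₃g₀g₀ᵀ, 0]] is invertible and symmetric, with signature (n, n) (i.e., n positive and n negative eigenvalues). -/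
/-!
The block `A = c₃ g + d₃ (g y)(g y)ᵀ` factors as `g (c₃ I + d₃ y (g y)ᵀ)`, so the matrix determinant
lemma gives `det A = c₃ⁿ det g (c₃ + 2 t d₃) / c₃ ≠ 0`, and `M = [[0, A], [A, 0]]` is invertible.
Conjugation by `diag(I, -I)` sends `M` to `-M`, so the characteristic polynomial of the symmetric
matrix `M`, hence its spectrum, is invariant under `λ ↦ -λ`. As no eigenvalue vanishes, exactly
half of the `2n` eigenvalues are positive.
-/

open Matrix Polynomial Finset

namespace Matrix

variable {n : Type*} [Fintype n] [DecidableEq n]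

theorem det_smul_add_vecMulVec_mulVec {K : Type*} [Field K] (g : Matrix n n K) (y w : n → K)
    {c : K} (hc : c ≠ 0) (d : K) :
    (c • g + d • vecMulVec (g *ᵥ y) w).det =
      c ^ Fintype.card n * g.det * (1 + d / c * (w ⬝ᵥ y)) := by
  have hfactor :
      c • g + d • vecMulVec (g *ᵥ y) w = g * (c • (1 + vecMulVec ((d / c) • y) w)) := by
    rw [smul_vecMulVec, mul_smul_comm, Matrix.mul_add, mul_one, Matrix.mul_smul, mul_vecMulVec,
      smul_add, smul_smul, mul_div_cancel₀ _ hc]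
  rw [hfactor, det_mul, det_smul, vecMulVec_eq (ι := Unit),
    det_one_add_replicateCol_mul_replicateRow, dotProduct_smul, smul_eq_mul]
  ring

theorem isUnit_fromBlocks_zero {R : Type*} [CommRing R] {B C : Matrix n n R} (hB : IsUnit B)
    (hC : IsUnit C) : IsUnit (fromBlocks 0 B C 0) := by
  refine IsUnit.of_mul_eq_one (fromBlocks 0 C⁻¹ B⁻¹ 0) ?_
  rw [isUnit_iff_isUnit_det] at hB hC
  simp [fromBlocks_multiply, mul_nonsing_inv _ hB, mul_nonsing_inv _ hC, fromBlocks_one]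

theorem charpoly_neg_fromBlocks_zero {m R : Type*} [Fintype m] [DecidableEq m] [CommRing R]
    (B : Matrix m n R) (C : Matrix n m R) :
    (-fromBlocks 0 B C 0).charpoly = (fromBlocks 0 B C 0).charpoly := by
  set S : Matrix (m ⊕ n) (m ⊕ n) R := fromBlocks 1 0 0 (-1)
  have hS : S * S = 1 := by simp [S, fromBlocks_multiply, fromBlocks_one]
  have hconj : S * fromBlocks 0 B C 0 * S = -fromBlocks 0 B C 0 := by
    simp [S, fromBlocks_multiply, fromBlocks_neg]
  rw [← hconj, charpoly_mul_comm, ← mul_assoc, hS, one_mul]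

namespace IsHermitian

variable {𝕜 : Type*} [RCLike 𝕜] {A : Matrix n n 𝕜}

theorem charpoly_neg (hA : A.IsHermitian) :
    (-A).charpoly = ∏ i, (X + C (hA.eigenvalues i : 𝕜)) := by
  conv_lhs => rw [hA.spectral_theorem, Unitary.conjStarAlgAut_apply, ← Matrix.mul_neg,
    charpoly_mul_comm, ← mul_assoc]
  rw [Matrix.neg_mul, Matrix.neg_mul]
  simp [charpoly_diagonal, sub_eq_add_neg]

theorem card_pos_eigenvalues_eq_card_neg (hA : A.IsHermitian)
    (h : (-A).charpoly = A.charpoly) :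
    #{i | 0 < hA.eigenvalues i} = #{i | hA.eigenvalues i < 0} := by
  have hroots : univ.val.map (fun i => -(hA.eigenvalues i : 𝕜)) =
      univ.val.map (fun i => (hA.eigenvalues i : 𝕜)) := by
    have hcharpoly := congrArg roots h
    rw [hA.roots_charpoly_eq_eigenvalues, hA.charpoly_neg, roots_prod _ _
      (prod_ne_zero_iff.mpr fun i _ => X_add_C_ne_zero _)] at hcharpoly
    simpa using hcharpoly
  have hcount := congrArg (fun s => (s.map RCLike.re).countP (0 < ·)) hroots
  simp only [Multiset.map_map, Multiset.countP_map, Function.comp_def] at hcount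
  simpa [card_def, filter_val] using hcount.symm

theorem card_pos_add_card_neg_eigenvalues (hA : A.IsHermitian) (hunit : IsUnit A) :
    #{i | 0 < hA.eigenvalues i} + #{i | hA.eigenvalues i < 0} = Fintype.card n := by
  have hne : ∀ i, hA.eigenvalues i ≠ 0 := by
    intro i hi
    have hdet := (isUnit_iff_isUnit_det A).mp hunit
    rw [hA.det_eq_prod_eigenvalues, isUnit_iff_ne_zero, prod_ne_zero_iff] at hdet
    simpa [hi] using hdet i
  rw [← card_univ, ← card_filter_add_card_filter_not (s := univ) (p := (0 < hA.eigenvalues ·))]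
  congr 1
  exact congrArg card <| filter_congr fun i _ => by simp [not_lt, le_iff_lt_or_eq, hne i]

end IsHermitian

end Matrix

open scoped Classical in
theorem stmt_6_general (n : ℕ) (g : Matrix (Fin n) (Fin n) ℝ) (hg : g.PosDef)
    (y : Fin n → ℝ) (t : ℝ) (ht : t = (1/2) * (y ⬝ᵥ g.mulVec y))
    (c₃ d₃ : ℝ) (hc₃ : c₃ ≠ 0) (hcd : c₃ + 2 * t * d₃ ≠ 0)
    (A : Matrix (Fin n) (Fin n) ℝ)
    (hA : A = c₃ • g + d₃ • vecMulVec (g.mulVec y) (g.mulVec y))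
    (M : Matrix (Fin n ⊕ Fin n) (Fin n ⊕ Fin n) ℝ)
    (hM : M = fromBlocks 0 A A 0) :
    IsUnit M ∧ M.IsSymm ∧
      ∀ hHerm : M.IsHermitian,
        (Finset.univ.filter fun i => 0 < hHerm.eigenvalues i).card = n ∧
        (Finset.univ.filter fun i => hHerm.eigenvalues i < 0).card = n := by
  have hAsymm : A.IsSymm := by
    rw [hA, IsSymm, transpose_add, transpose_smul, transpose_smul, transpose_vecMulVec,
      (isHermitian_iff_isSymm.mp hg.isHermitian).eq]
  have hAunit : IsUnit A := by
    rw [isUnit_iff_isUnit_det, hA, det_smul_add_vecMulVec_mulVec _ _ _ hc₃, isUnit_iff_ne_zero,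
      dotProduct_comm]
    have hquot : 1 + d₃ / c₃ * (y ⬝ᵥ g *ᵥ y) = (c₃ + 2 * t * d₃) / c₃ := by
      rw [ht]
      field_simp
    rw [hquot]
    exact mul_ne_zero (mul_ne_zero (pow_ne_zero _ hc₃) hg.det_pos.ne') (div_ne_zero hcd hc₃)
  have hMunit : IsUnit M := hM ▸ isUnit_fromBlocks_zero hAunit hAunit
  refine ⟨hMunit, by rw [hM, IsSymm, fromBlocks_transpose, hAsymm.eq, transpose_zero], ?_⟩
  intro hHerm
  have hbalance := hHerm.card_pos_eigenvalues_eq_card_neg (hM ▸ charpoly_neg_fromBlocks_zero A A)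
  have htotal := hHerm.card_pos_add_card_neg_eigenvalues hMunit
  simp only [Fintype.card_sum, Fintype.card_fin] at htotal
  omega

open scoped Classical in
theorem stmt_6 (n : ℕ) (g : Matrix (Fin n) (Fin n) ℝ) (hg : g.PosDef)
    (y : Fin n → ℝ) (hy : y ≠ 0) (t : ℝ) (ht : t = (1/2) * (y ⬝ᵥ g.mulVec y))
    (c₃ d₃ : ℝ) (hc₃ : c₃ ≠ 0) (hcd : c₃ + 2 * t * d₃ ≠ 0)
    (A : Matrix (Fin n) (Fin n) ℝ)
    (hA : A = c₃ • g + d₃ • vecMulVec (g.mulVec y) (g.mulVec y))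
    (M : Matrix (Fin n ⊕ Fin n) (Fin n ⊕ Fin n) ℝ)
    (hM : M = fromBlocks 0 A A 0) :
    IsUnit M ∧ M.IsSymm ∧
      ∀ hHerm : M.IsHermitian,
        (Finset.univ.filter fun i => 0 < hHerm.eigenvalues i).card = n ∧
        (Finset.univ.filter fun i => hHerm.eigenvalues i < 0).card = n :=
  stmt_6_general n g hg y t ht c₃ d₃ hc₃ hcd A hA M hM
end
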